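/- If G is a graph on n vertices with minimum degree at least 2, then the game total domination number of G satisfies γ_tg(G) ≤ 3n/4. -/

import Mathlib

open SimpleGraph Finset

inductive GameColor | white | green | blue | red
deriving DecidableEq

def GameColor.weight : GameColor → ℕ
  | white => 3
  | green => 2
  | blue => 1
  | red => 0

variable {V : Type} [Fintype V] [DecidableEq V]

/-- The set of vertices totally dominated by the played set `D`. -/
def totDom (G : SimpleGraph V) [DecidableRel G.Adj] (D : Finset V) : Finset V :=
  Finset.univ.filter fun u => ∃ v ∈ D, G.Adj u v

/-- A vertex `v` is a legal move if playing it totally dominates a new vertex. -/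
def isLegal (G : SimpleGraph V) [DecidableRel G.Adj] (D : Finset V) (v : V) : Prop :=
  ∃ u, G.Adj v u ∧ u ∉ totDom G D

instance (G : SimpleGraph V) [DecidableRel G.Adj] (D : Finset V) :
    DecidablePred (isLegal G D) := fun v =>
  decidable_of_iff (∃ u, G.Adj v u ∧ u ∉ totDom G D) Iff.rfl

/-- The color of a vertex in the partially total dominated graph with played set `D`. -/
def colorOf (G : SimpleGraph V) [DecidableRel G.Adj] (D : Finset V) (v : V) : GameColor :=
  if v ∈ totDom G D then
    (if isLegal G D v then .blue else .red)
  else (if v ∈ D then .green else .white)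

/-- The total weight of the colored graph. -/
def totalWeight (G : SimpleGraph V) [DecidableRel G.Adj] (D : Finset V) : ℕ :=
  ∑ v, (colorOf G D v).weight

/-- The residualGraph graph: delete red vertices and blue–blue edges. -/
def residualGraph (G : SimpleGraph V) [DecidableRel G.Adj] (D : Finset V) : SimpleGraph V where
  Adj u w := G.Adj u w ∧ colorOf G D u ≠ .red ∧ colorOf G D w ≠ .red ∧
      ¬(colorOf G D u = .blue ∧ colorOf G D w = .blue)
  symm := ⟨fun u w ⟨h, a, b, c⟩ => ⟨h.symm, b, a, fun ⟨x, y⟩ => c ⟨y, x⟩⟩⟩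
  loopless := ⟨fun u ⟨h, _⟩ => G.loopless.irrefl u h⟩

instance (G : SimpleGraph V) [DecidableRel G.Adj] (D : Finset V) :
    DecidableRel (residualGraph G D).Adj := fun u w =>
  decidable_of_iff (G.Adj u w ∧ colorOf G D u ≠ .red ∧ colorOf G D w ≠ .red ∧
      ¬(colorOf G D u = .blue ∧ colorOf G D w = .blue)) Iff.rfl

def legalMoves (G : SimpleGraph V) [DecidableRel G.Adj] (D : Finset V) : Finset V :=
  Finset.univ.filter (isLegal G D)

/-- The value of the total domination game from position `D` with `fuel` moves allowed,
where `isDom = true` when it is Dominator's turn (Dominator minimizes, Staller maximizes).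
Since each legal move totally dominates a new vertex, fuel `Fintype.card V` always suffices. -/
def gameVal (G : SimpleGraph V) [DecidableRel G.Adj] : Bool → ℕ → Finset V → ℕ
  | _, 0, _ => 0
  | isDom, n + 1, D =>
    if h : (legalMoves G D).Nonempty then
      if isDom then 1 + (legalMoves G D).inf' h fun v => gameVal G false n (insert v D)
      else 1 + (legalMoves G D).sup' h fun v => gameVal G true n (insert v D)
    else 0

/-- The game total domination number `γ_tg(G)`: Dominator starts, both play optimally. -/
def gtd (G : SimpleGraph V) [DecidableRel G.Adj] : ℕ :=
  gameVal G true (Fintype.card V) ∅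


/-!
Colour a position by the weights of `GameColor`: an unplayed vertex that is not yet totally
dominated is white (3), a played one green (2); a totally dominated vertex is blue (1) while it
is still a legal move and red (0) afterwards. The total weight starts at `3n`, every move lowers
it by at least 3, and a move that totally dominates two new vertices lowers it by at least 5.

By induction on the game, its value is at most a quarter of the weight when Dominator is to move
and at most a quarter of the weight plus one when Staller is. Dominator plays a move worth 5 if
one exists. Otherwise every move totally dominates exactly one new vertex, so at most `|U|` moves
remain, `U` the set of vertices not yet totally dominated, and a discharging count gives
`4|U| ≤ weight`: each `u ∈ U` has at least two neighbours, at most one of them (none if `u` is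
green) not blue, and no blue vertex is adjacent to two vertices of `U`.
-/

section

variable {G : SimpleGraph V} [DecidableRel G.Adj] {D D' : Finset V} {u v x : V}

omit [DecidableEq V] in
@[simp]
lemma mem_totDom : u ∈ totDom G D ↔ ∃ v ∈ D, G.Adj u v := by
  simp [totDom]

omit [DecidableEq V] in
lemma totDom_mono (hD : D ⊆ D') : totDom G D ⊆ totDom G D' := fun u hu => by
  obtain ⟨v, hv, huv⟩ := mem_totDom.1 hu
  exact mem_totDom.2 ⟨v, hD hv, huv⟩

lemma mem_totDom_insert_of_adj (h : G.Adj v u) : u ∈ totDom G (insert v D) :=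
  mem_totDom.2 ⟨v, mem_insert_self v D, h.symm⟩

lemma notMem_totDom_insert_self (hv : v ∉ totDom G D) : v ∉ totDom G (insert v D) := by
  intro h
  obtain ⟨w, hw, hvw⟩ := mem_totDom.1 h
  rcases mem_insert.1 hw with rfl | hw
  · exact G.loopless.irrefl _ hvw
  · exact hv (mem_totDom.2 ⟨w, hw, hvw⟩)

omit [DecidableEq V] in
lemma isLegal_of_subset (hD : D ⊆ D') (h : isLegal G D' v) : isLegal G D v :=
  let ⟨u, hvu, hu⟩ := h
  ⟨u, hvu, fun hu' => hu (totDom_mono hD hu')⟩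

omit [DecidableEq V] in
lemma not_isLegal_of_mem (hv : v ∈ D) : ¬ isLegal G D v := fun ⟨_, hvu, hu⟩ =>
  hu (mem_totDom.2 ⟨v, hv, hvu.symm⟩)

@[simp]
lemma mem_legalMoves : v ∈ legalMoves G D ↔ isLegal G D v := by
  simp [legalMoves]

lemma weight_colorOf_anti (hD : D ⊆ D') (x : V) :
    (colorOf G D' x).weight ≤ (colorOf G D x).weight := by
  have hdom : x ∈ totDom G D → x ∈ totDom G D' := fun h => totDom_mono hD h
  have hlegal : isLegal G D' x → isLegal G D x := isLegal_of_subset hD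
  have hmem := @hD x
  unfold colorOf
  split_ifs <;> simp_all [GameColor.weight]

lemma weight_colorOf_insert_self_add_one_le (hv : isLegal G D v) :
    (colorOf G (insert v D) v).weight + 1 ≤ (colorOf G D v).weight := by
  have hvD : v ∉ D := fun h => not_isLegal_of_mem h hv
  have hdom : v ∈ totDom G D → v ∈ totDom G (insert v D) := fun h =>
    totDom_mono (subset_insert v D) h
  have hself : v ∉ totDom G D → v ∉ totDom G (insert v D) := notMem_totDom_insert_self
  have hplayed : ¬ isLegal G (insert v D) v := not_isLegal_of_mem (mem_insert_self v D)
  unfold colorOf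
  split_ifs <;> simp_all [GameColor.weight]

lemma weight_colorOf_insert_add_two_le (h : G.Adj v u) (hu : u ∉ totDom G D) :
    (colorOf G (insert v D) u).weight + 2 ≤ (colorOf G D u).weight := by
  have hdom : u ∈ totDom G (insert v D) := mem_totDom_insert_of_adj h
  have hplayed : u ∈ D → ¬ isLegal G (insert v D) u := fun huD =>
    not_isLegal_of_mem (mem_insert_of_mem huD)
  unfold colorOf
  split_ifs <;> simp_all [GameColor.weight]

lemma sum_add_le_sum_of_subset {ι M : Type*} [DecidableEq ι] [AddCommMonoid M] [PartialOrder M]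
    [IsOrderedAddMonoid M] {s t : Finset ι} {f g : ι → M} {k : M} (hts : t ⊆ s)
    (hfg : ∀ i ∈ s \ t, f i ≤ g i) (ht : ∑ i ∈ t, f i + k ≤ ∑ i ∈ t, g i) :
    ∑ i ∈ s, f i + k ≤ ∑ i ∈ s, g i := by
  rw [← sum_sdiff hts, ← sum_sdiff hts, add_assoc]
  exact add_le_add (sum_le_sum hfg) ht

lemma totalWeight_insert_add_three_le (hv : isLegal G D v) :
    totalWeight G (insert v D) + 3 ≤ totalWeight G D := by
  obtain ⟨u, hvu, hu⟩ := hv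
  refine sum_add_le_sum_of_subset (subset_univ {v, u})
    (fun x _ => weight_colorOf_anti (subset_insert v D) x) ?_
  rw [sum_pair (G.ne_of_adj hvu), sum_pair (G.ne_of_adj hvu)]
  have hv := weight_colorOf_insert_self_add_one_le ⟨u, hvu, hu⟩
  have hu := weight_colorOf_insert_add_two_le hvu hu
  omega

lemma totalWeight_insert_add_five_le {u₁ u₂ : V} (h₁ : G.Adj v u₁) (h₂ : G.Adj v u₂)
    (hne : u₁ ≠ u₂) (hu₁ : u₁ ∉ totDom G D) (hu₂ : u₂ ∉ totDom G D) :
    totalWeight G (insert v D) + 5 ≤ totalWeight G D := by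
  have hv : v ∉ ({u₁, u₂} : Finset V) := by simp [G.ne_of_adj h₁, G.ne_of_adj h₂]
  refine sum_add_le_sum_of_subset (subset_univ {v, u₁, u₂})
    (fun x _ => weight_colorOf_anti (subset_insert v D) x) ?_
  rw [sum_insert hv, sum_insert hv, sum_pair hne, sum_pair hne]
  have hv := weight_colorOf_insert_self_add_one_le ⟨u₁, h₁, hu₁⟩
  have hu₁ := weight_colorOf_insert_add_two_le h₁ hu₁
  have hu₂ := weight_colorOf_insert_add_two_le h₂ hu₂
  omega

lemma card_compl_totDom_insert_lt (hv : isLegal G D v) :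
    #(totDom G (insert v D))ᶜ < #(totDom G D)ᶜ := by
  obtain ⟨u, hvu, hu⟩ := hv
  refine card_lt_card (compl_ssubset_compl.2 ?_)
  exact (ssubset_iff_of_subset (totDom_mono (subset_insert v D))).2
    ⟨u, mem_totDom_insert_of_adj hvu, hu⟩

lemma gameVal_true_succ (h : (legalMoves G D).Nonempty) (n : ℕ) :
    gameVal G true (n + 1) D =
      1 + (legalMoves G D).inf' h fun v => gameVal G false n (insert v D) := by
  rw [gameVal, dif_pos h, if_pos rfl]

lemma gameVal_false_succ (h : (legalMoves G D).Nonempty) (n : ℕ) :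
    gameVal G false (n + 1) D =
      1 + (legalMoves G D).sup' h fun v => gameVal G true n (insert v D) := by
  rw [gameVal, dif_pos h, if_neg Bool.false_ne_true]

lemma gameVal_succ_of_not_nonempty (h : ¬ (legalMoves G D).Nonempty) (b : Bool) (n : ℕ) :
    gameVal G b (n + 1) D = 0 := by
  rw [gameVal, dif_neg h]

lemma gameVal_le_card_compl_totDom (b : Bool) (n : ℕ) (D : Finset V) :
    gameVal G b n D ≤ #(totDom G D)ᶜ := by
  induction n generalizing b D with
  | zero => simp [gameVal]
  | succ n ih =>
    by_cases h : (legalMoves G D).Nonempty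
    · have hstep : ∀ v ∈ legalMoves G D, ∀ b', gameVal G b' n (insert v D) + 1 ≤ #(totDom G D)ᶜ :=
        fun v hv b' => (ih b' _).trans_lt (card_compl_totDom_insert_lt (mem_legalMoves.1 hv))
      cases b with
      | true =>
        obtain ⟨v, hv⟩ := h
        rw [gameVal_true_succ ⟨v, hv⟩]
        have hinf := inf'_le (fun v => gameVal G false n (insert v D)) hv
        have hnext := hstep v hv false
        omega
      | false =>
        obtain ⟨v, hv, hmax⟩ := exists_mem_eq_sup' h fun v => gameVal G true n (insert v D)
        rw [gameVal_false_succ h, hmax]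
        have hnext := hstep v hv true
        omega
    · rw [gameVal_succ_of_not_nonempty h]
      exact Nat.zero_le _

variable (G D) in
def blueVertices : Finset V := {x | colorOf G D x = .blue}

lemma mem_blueVertices : x ∈ blueVertices G D ↔ x ∈ totDom G D ∧ isLegal G D x := by
  simp only [blueVertices, mem_filter, mem_univ, true_and]
  unfold colorOf
  split_ifs <;> simp_all

lemma weight_colorOf_of_mem_blueVertices (hx : x ∈ blueVertices G D) :
    (colorOf G D x).weight = 1 := by
  simp only [blueVertices, mem_filter, mem_univ, true_and] at hx
  rw [hx, GameColor.weight]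

lemma mem_blueVertices_of_adj (hu : u ∉ totDom G D) (hux : G.Adj u x) (hx : x ∈ totDom G D) :
    x ∈ blueVertices G D :=
  mem_blueVertices.2 ⟨hx, u, hux.symm, hu⟩

lemma four_le_weight_add_card_blue_neighbors (hmin : ∀ v, 2 ≤ G.degree v)
    (hsingle : ∀ w, {u | G.Adj w u ∧ u ∉ totDom G D}.Subsingleton) (hu : u ∉ totDom G D) :
    4 ≤ (colorOf G D u).weight + #(G.neighborFinset u ∩ blueVertices G D) := by
  have hdeg := hmin u
  rw [← G.card_neighborFinset_eq_degree, ← card_sdiff_add_card_inter _ (blueVertices G D)]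
    at hdeg
  have hnonblue : ∀ x ∈ G.neighborFinset u \ blueVertices G D, G.Adj u x ∧ x ∉ totDom G D :=
    fun x hx => by
      obtain ⟨hux, hxB⟩ := mem_sdiff.1 hx
      rw [mem_neighborFinset] at hux
      exact ⟨hux, fun hx => hxB (mem_blueVertices_of_adj hu hux hx)⟩
  by_cases huD : u ∈ D
  · have hempty : G.neighborFinset u \ blueVertices G D = ∅ := eq_empty_of_forall_notMem
      fun x hx => (hnonblue x hx).2 (mem_totDom.2 ⟨u, huD, (hnonblue x hx).1.symm⟩)
    have hgreen : colorOf G D u = .green := by simp [colorOf, hu, huD]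
    rw [hempty, card_empty] at hdeg
    rw [hgreen, GameColor.weight]
    omega
  · have hone : #(G.neighborFinset u \ blueVertices G D) ≤ 1 := card_le_one.2
      fun a ha b hb => hsingle u (hnonblue a ha) (hnonblue b hb)
    have hwhite : colorOf G D u = .white := by simp [colorOf, hu, huD]
    rw [hwhite, GameColor.weight]
    omega

lemma sum_card_blue_neighbors_le
    (hsingle : ∀ w, {u | G.Adj w u ∧ u ∉ totDom G D}.Subsingleton) :
    ∑ u ∈ (totDom G D)ᶜ, #(G.neighborFinset u ∩ blueVertices G D) ≤ #(blueVertices G D) := by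
  have hdisj : (((totDom G D)ᶜ : Finset V) : Set V).PairwiseDisjoint
      fun u => G.neighborFinset u ∩ blueVertices G D := by
    intro x hx y hy hxy
    refine disjoint_left.2 fun b hbx hby => hxy ?_
    simp only [coe_compl, Set.mem_compl_iff, mem_coe] at hx hy
    simp only [mem_inter, mem_neighborFinset] at hbx hby
    exact hsingle b ⟨hbx.1.symm, hx⟩ ⟨hby.1.symm, hy⟩
  rw [← card_biUnion hdisj]
  exact card_le_card (biUnion_subset.2 fun _ _ => inter_subset_right)

lemma sum_weight_compl_totDom_add_card_blue_le :
    ∑ u ∈ (totDom G D)ᶜ, (colorOf G D u).weight + #(blueVertices G D) ≤ totalWeight G D := by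
  have hdisj : Disjoint (totDom G D)ᶜ (blueVertices G D) :=
    disjoint_left.2 fun x hx hxB => mem_compl.1 hx (mem_blueVertices.1 hxB).1
  calc ∑ u ∈ (totDom G D)ᶜ, (colorOf G D u).weight + #(blueVertices G D)
      = ∑ x ∈ (totDom G D)ᶜ ∪ blueVertices G D, (colorOf G D x).weight := by
        rw [sum_union hdisj, card_eq_sum_ones (blueVertices G D)]
        exact congrArg _ (sum_congr rfl fun x hx => (weight_colorOf_of_mem_blueVertices hx).symm)
    _ ≤ totalWeight G D := sum_le_sum_of_subset (subset_univ _)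

lemma four_mul_card_compl_totDom_le_totalWeight (hmin : ∀ v, 2 ≤ G.degree v)
    (hsingle : ∀ w, {u | G.Adj w u ∧ u ∉ totDom G D}.Subsingleton) :
    4 * #(totDom G D)ᶜ ≤ totalWeight G D :=
  calc 4 * #(totDom G D)ᶜ = ∑ _u ∈ (totDom G D)ᶜ, 4 := by rw [sum_const, smul_eq_mul, mul_comm]
    _ ≤ ∑ u ∈ (totDom G D)ᶜ,
          ((colorOf G D u).weight + #(G.neighborFinset u ∩ blueVertices G D)) :=
        sum_le_sum fun u hu =>
          four_le_weight_add_card_blue_neighbors hmin hsingle (mem_compl.1 hu)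
    _ ≤ ∑ u ∈ (totDom G D)ᶜ, (colorOf G D u).weight + #(blueVertices G D) := by
        rw [sum_add_distrib]
        gcongr
        exact sum_card_blue_neighbors_le hsingle
    _ ≤ totalWeight G D := sum_weight_compl_totDom_add_card_blue_le

lemma gameVal_mul_four_le (hmin : ∀ v, 2 ≤ G.degree v) (n : ℕ) (D : Finset V) :
    gameVal G true n D * 4 ≤ totalWeight G D ∧
      gameVal G false n D * 4 ≤ totalWeight G D + 1 := by
  induction n generalizing D with
  | zero => simp [gameVal]
  | succ n ih =>
    constructor
    · by_cases hsingle : ∀ w, {u | G.Adj w u ∧ u ∉ totDom G D}.Subsingleton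
      · have hmoves := gameVal_le_card_compl_totDom (G := G) true (n + 1) D
        have hweight := four_mul_card_compl_totDom_le_totalWeight hmin hsingle
        omega
      · push Not at hsingle
        obtain ⟨v, u₁, ⟨h₁, hu₁⟩, u₂, ⟨h₂, hu₂⟩, hne⟩ := hsingle
        have hv : v ∈ legalMoves G D := mem_legalMoves.2 ⟨u₁, h₁, hu₁⟩
        rw [gameVal_true_succ ⟨v, hv⟩]
        have hinf := inf'_le (fun v => gameVal G false n (insert v D)) hv
        have hstaller := (ih (insert v D)).2
        have hdrop := totalWeight_insert_add_five_le h₁ h₂ hne hu₁ hu₂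
        omega
    · by_cases h : (legalMoves G D).Nonempty
      · obtain ⟨v, hv, hmax⟩ := exists_mem_eq_sup' h fun v => gameVal G true n (insert v D)
        rw [gameVal_false_succ h, hmax]
        have hdominator := (ih (insert v D)).1
        have hdrop := totalWeight_insert_add_three_le (mem_legalMoves.1 hv)
        omega
      · rw [gameVal_succ_of_not_nonempty h]
        omega

variable (G) in
lemma totalWeight_empty : totalWeight G ∅ = 3 * Fintype.card V := by
  simp [totalWeight, colorOf, totDom, GameColor.weight, mul_comm]

end

/-- If `G` is a graph on `n` vertices with minimum degree at least 2, then
`γ_tg(G) ≤ 3n/4`. -/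
theorem stmt13 (G : SimpleGraph V) [DecidableRel G.Adj]
    (hmin : ∀ v, 2 ≤ G.degree v) :
    (gtd G : ℚ) ≤ 3 * (Fintype.card V) / 4 := by
  have h := (gameVal_mul_four_le hmin (Fintype.card V) ∅).1
  rw [totalWeight_empty] at h
  rw [le_div_iff₀ (by norm_num : (0 : ℚ) < 4)]
  exact_mod_cast h
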